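/- arXiv:2105.00853 — 3 statements merged into one kernel-verified Lean document; each statement's English description precedes it below -/
import Mathlib

section
/- Let p ≥ 1, n > p, and L ∈ ℝ. Take the uniform knots t_i := i/(n+p) for i = 0, …, n+p, and define control points (x_i, y_i) ∈ ℝ², i = 0, …, n−1, by x_i := x_0 + i·H with x_0 := −L/2 − L(p−1)/(2(n−p)) and H := L/(n−p), and with y_i satisfying y_i = y_{n−p+i} for i = 0, …, p−1. Define the plane B-spline curve (x(t), y(t)) := Σ_{i=0}^{n−1} B_i^p(t) (x_i, y_i). Then x(t_p) = −L/2, x(t_n) = L/2, and for every k = 0, …, p−1 the k-th iterated derivative of y at t_p equals the k-th iterated derivative of y at t_n. -/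
/-!
With uniform knots `tᵢ = i / (n + p)` every B-spline is a translate of the cardinal B-spline
`N_p` (knots `0, 1, …, p + 1`): `B_i^p(s) = N_p((n + p) s - i)`. `N_p` is `C^{p-1}`, and it and
its first `p - 1` derivatives vanish outside `(0, p + 1)`, so at a knot `t_j` with `p ≤ j ≤ n` the
curve and its first `p - 1` derivatives only see the `p` control points `j - p, …, j - 1`,
weighted by `N_p^{(k)}(1), …, N_p^{(k)}(p)`. The windows at `t_p` and `t_n` are `y₀, …, y_{p-1}` and
`y_{n-p}, …, y_{n-1}`, which agree by periodicity. For the affine `xᵢ`, the partition of unity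
`∑ N_p(u) = 1` and the linear precision `∑ u N_p(u) = (p + 1) / 2` give
`x(t_j) = x₀ + (j - (p + 1) / 2) H`.
-/

/-- The B-spline functions of degree `p` for the knot sequence `t`, defined by the
Cox–de Boor recursion. `bspline t p i` is `B_i^p`. Fractions with zero denominator
are `0` (Lean's convention `x / 0 = 0`). -/
noncomputable def bspline (t : ℕ → ℝ) : ℕ → ℕ → ℝ → ℝ
  | 0, i, x => if t i ≤ x ∧ x < t (i + 1) then 1 else 0
  | p + 1, i, x =>
      (x - t i) / (t (i + p + 1) - t i) * bspline t p i x +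
      (t (i + p + 2) - x) / (t (i + p + 2) - t (i + 1)) * bspline t p (i + 1) x

open Finset Filter Set Topology

noncomputable def cardinalBSpline : ℕ → ℝ → ℝ
  | 0, x => if 0 ≤ x ∧ x < 1 then 1 else 0
  | p + 1, x =>
    x / (p + 1) * cardinalBSpline p x + (p + 2 - x) / (p + 1) * cardinalBSpline p (x - 1)

local notation "N" => cardinalBSpline

theorem cardinalBSpline_succ (p : ℕ) (x : ℝ) :
    N (p + 1) x = x / (p + 1) * N p x + (p + 2 - x) / (p + 1) * N p (x - 1) := rfl

theorem cardinalBSpline_eq_zero_of_neg : ∀ (p : ℕ) {x : ℝ}, x < 0 → N p x = 0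
  | 0, x, hx => if_neg fun h => by linarith [h.1]
  | p + 1, x, hx => by
    rw [cardinalBSpline_succ, cardinalBSpline_eq_zero_of_neg p hx,
      cardinalBSpline_eq_zero_of_neg p (by linarith)]
    ring

theorem cardinalBSpline_eq_zero_of_add_one_le : ∀ (p : ℕ) {x : ℝ}, p + 1 ≤ x → N p x = 0
  | 0, x, hx => if_neg fun h => by push_cast at hx; linarith [h.2]
  | p + 1, x, hx => by
    push_cast at hx
    rw [cardinalBSpline_succ, cardinalBSpline_eq_zero_of_add_one_le p (by linarith),
      cardinalBSpline_eq_zero_of_add_one_le p (by linarith)]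
    ring

theorem cardinalBSpline_one (x : ℝ) : N 1 x = max 0 (1 - |x - 1|) := by
  rw [cardinalBSpline_succ]
  simp only [cardinalBSpline, Nat.cast_zero, zero_add, div_one]
  rcases le_total x 1 with h | h
  · rw [abs_of_nonpos (by linarith)]
    split_ifs <;> rw [max_def] <;> split_ifs <;> grind
  · rw [abs_of_nonneg (by linarith)]
    split_ifs <;> rw [max_def] <;> split_ifs <;> grind

theorem continuous_cardinalBSpline : ∀ {p : ℕ}, 1 ≤ p → Continuous (N p)
  | 1, _ => by
    simp only [funext cardinalBSpline_one]
    fun_prop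
  | p + 2, _ => by
    have ih := continuous_cardinalBSpline (p := p + 1) (by omega)
    simp only [funext (cardinalBSpline_succ (p + 1))]
    fun_prop

theorem hasDerivAt_cardinalBSpline_zero_of_notMem {x : ℝ} (hx : x ∉ range ((↑) : ℤ → ℝ)) :
    HasDerivAt (N 0) 0 x := by
  have h0 : x ≠ 0 := fun h => hx ⟨0, by simp [h]⟩
  have h1 : x ≠ 1 := fun h => hx ⟨1, by simp [h]⟩
  refine (hasDerivAt_const x (N 0 x)).congr_of_eventuallyEq ?_
  rcases h0.lt_or_gt with h0 | h0
  · filter_upwards [Iio_mem_nhds h0] with y hy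
    rw [cardinalBSpline_eq_zero_of_neg 0 hy, cardinalBSpline_eq_zero_of_neg 0 h0]
  rcases h1.lt_or_gt with h1 | h1
  · filter_upwards [Ioo_mem_nhds h0 h1] with y hy
    simp only [cardinalBSpline]
    rw [if_pos ⟨hy.1.le, hy.2⟩, if_pos ⟨h0.le, h1⟩]
  · filter_upwards [Ioi_mem_nhds h1] with y hy
    rw [cardinalBSpline_eq_zero_of_add_one_le 0 (by simpa using hy.le),
      cardinalBSpline_eq_zero_of_add_one_le 0 (by simpa using h1.le)]

theorem hasDerivAt_cardinalBSpline_succ {p : ℕ} {x d d' : ℝ} (hd : HasDerivAt (N p) d x)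
    (hd' : HasDerivAt (N p) d' (x - 1)) :
    HasDerivAt (N (p + 1)) ((N p x - N p (x - 1) + x * d + (p + 2 - x) * d') / (p + 1)) x := by
  have hd'' : HasDerivAt (fun y => N p (y - 1)) d' x := by
    simpa using hd'.comp_sub_const x 1
  have hl : HasDerivAt (fun y : ℝ => y / (p + 1)) (1 / (p + 1)) x :=
    (hasDerivAt_id x).div_const _
  have hr : HasDerivAt (fun y : ℝ => (p + 2 - y) / (p + 1)) (-1 / (p + 1)) x := by
    simpa using ((hasDerivAt_id x).const_sub ((p : ℝ) + 2)).div_const ((p : ℝ) + 1)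
  rw [funext (cardinalBSpline_succ p)]
  exact ((hl.mul hd).add (hr.mul hd'')).congr_deriv (by field_simp; ring)

theorem hasDerivAt_cardinalBSpline_of_notMem {x : ℝ} (hx : x ∉ range ((↑) : ℤ → ℝ)) (p : ℕ) :
    HasDerivAt (N (p + 1)) (N p x - N p (x - 1)) x := by
  have hshift : ∀ {y : ℝ}, y ∉ range ((↑) : ℤ → ℝ) → y - 1 ∉ range ((↑) : ℤ → ℝ) :=
    fun hy ⟨k, hk⟩ => hy ⟨k + 1, by push_cast; linarith⟩
  induction p generalizing x with
  | zero =>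
    convert hasDerivAt_cardinalBSpline_succ (hasDerivAt_cardinalBSpline_zero_of_notMem hx)
      (hasDerivAt_cardinalBSpline_zero_of_notMem (hshift hx)) using 1
    simp
  | succ p ih =>
    convert hasDerivAt_cardinalBSpline_succ (ih hx) (ih (hshift hx)) using 1
    rw [cardinalBSpline_succ p x, cardinalBSpline_succ p (x - 1)]
    push_cast
    field_simp
    ring

theorem hasDerivAt_of_eventually_hasDerivAt {E : Type*} [NormedAddCommGroup E]
    [NormedSpace ℝ E] {f g : ℝ → E} {x : ℝ} (hfg : ∀ᶠ y in 𝓝[≠] x, HasDerivAt f (g y) y)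
    (hf : ContinuousAt f x) (hg : ContinuousAt g x) : HasDerivAt f (g x) x := by
  have hright : ∀ᶠ y in 𝓝[>] x, HasDerivAt f (g y) y :=
    nhdsWithin_mono x (fun y hy => ne_of_gt hy) hfg
  have hleft : ∀ᶠ y in 𝓝[<] x, HasDerivAt f (g y) y :=
    nhdsWithin_mono x (fun y hy => ne_of_lt hy) hfg
  have hdiff : DifferentiableOn ℝ f {y | HasDerivAt f (g y) y} := fun y hy =>
    hy.differentiableAt.differentiableWithinAt
  have A : HasDerivWithinAt f (g x) (Ici x) x :=
    hasDerivWithinAt_Ici_of_tendsto_deriv hdiff hf.continuousWithinAt hright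
      ((hg.tendsto.mono_left nhdsWithin_le_nhds).congr' (hright.mono fun y hy => hy.deriv.symm))
  have B : HasDerivWithinAt f (g x) (Iic x) x :=
    hasDerivWithinAt_Iic_of_tendsto_deriv hdiff hf.continuousWithinAt hleft
      ((hg.tendsto.mono_left nhdsWithin_le_nhds).congr' (hleft.mono fun y hy => hy.deriv.symm))
  simpa using B.union A

theorem eventually_notMem_range_intCast (x : ℝ) :
    ∀ᶠ y in 𝓝[≠] x, y ∉ range ((↑) : ℤ → ℝ) := by
  have hclosed : IsClosed (((↑) : ℤ → ℝ) '' {k | (k : ℝ) ≠ x}) :=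
    Int.isClosedEmbedding_coe_real.isClosedMap _ (isClosed_discrete _)
  have hnhds : ∀ᶠ y in 𝓝 x, y ∉ ((↑) : ℤ → ℝ) '' {k | (k : ℝ) ≠ x} :=
    hclosed.isOpen_compl.mem_nhds fun ⟨k, hk, hkx⟩ => hk hkx
  filter_upwards [nhdsWithin_le_nhds hnhds, self_mem_nhdsWithin] with y hy hyx
  rintro ⟨k, rfl⟩
  exact hy ⟨k, hyx, rfl⟩

theorem hasDerivAt_cardinalBSpline (p : ℕ) (x : ℝ) :
    HasDerivAt (N (p + 2)) (N (p + 1) x - N (p + 1) (x - 1)) x := by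
  have hcont := continuous_cardinalBSpline (p := p + 1) (by omega)
  exact hasDerivAt_of_eventually_hasDerivAt
    ((eventually_notMem_range_intCast x).mono fun _ hy => hasDerivAt_cardinalBSpline_of_notMem hy _)
    (continuous_cardinalBSpline (by omega)).continuousAt
    (hcont.sub (hcont.comp (continuous_sub_right 1))).continuousAt

theorem deriv_cardinalBSpline (p : ℕ) :
    deriv (N (p + 2)) = fun x => N (p + 1) x - N (p + 1) (x - 1) :=
  funext fun x => (hasDerivAt_cardinalBSpline p x).deriv

theorem contDiff_cardinalBSpline : ∀ {k p : ℕ}, k < p → ContDiff ℝ k (N p)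
  | 0, p, h => contDiff_zero.mpr (continuous_cardinalBSpline h)
  | k + 1, p + 2, h => by
    have ih : ContDiff ℝ k (N (p + 1)) := contDiff_cardinalBSpline (by omega)
    have hderiv : ContDiff ℝ k (deriv (N (p + 2))) := by
      rw [deriv_cardinalBSpline]
      exact ih.sub (ih.comp (contDiff_id.sub contDiff_const))
    exact_mod_cast contDiff_succ_iff_deriv.mpr
      ⟨fun x => (hasDerivAt_cardinalBSpline p x).differentiableAt, by simp, hderiv⟩

theorem iteratedDeriv_cardinalBSpline_eq_zero_of_notMem {k p : ℕ} (hk : k < p) {x : ℝ}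
    (hx : x ∉ Ioo 0 ((p : ℝ) + 1)) : iteratedDeriv k (N p) x = 0 := by
  have hvanish : EqOn (N p) 0 (Iio 0 ∪ Ioi ((p : ℝ) + 1)) := by
    rintro y (hy | hy)
    · exact cardinalBSpline_eq_zero_of_neg p hy
    · exact cardinalBSpline_eq_zero_of_add_one_le p (le_of_lt hy)
  have hopen : EqOn (iteratedDeriv k (N p)) 0 (Iio 0 ∪ Ioi ((p : ℝ) + 1)) := fun y hy => by
    simpa using hvanish.iteratedDeriv_of_isOpen (isOpen_Iio.union isOpen_Ioi) k hy
  have hclosed : IsClosed {y | iteratedDeriv k (N p) y = 0} :=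
    isClosed_eq ((contDiff_cardinalBSpline hk).continuous_iteratedDeriv k le_rfl) continuous_const
  refine hclosed.closure_subset_iff.mpr hopen ?_
  rw [closure_union, closure_Iio, closure_Ioi]
  rwa [Set.mem_Ioo, not_and_or, not_lt, not_lt] at hx

theorem cardinalBSpline_eq_zero_of_notMem {p : ℕ} (hp : 1 ≤ p) {x : ℝ}
    (hx : x ∉ Ioo 0 ((p : ℝ) + 1)) : N p x = 0 :=
  iteratedDeriv_cardinalBSpline_eq_zero_of_notMem hp hx

theorem sum_range_mul_cardinalBSpline_succ (p : ℕ) (c : ℕ → ℝ) {x : ℝ} (hx₀ : 0 ≤ x)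
    (hx₁ : x < 1) :
    ∑ u ∈ range (p + 2), c u * N (p + 1) (x + u) =
      ∑ u ∈ range (p + 1),
        (c u * (x + u) + c (u + 1) * (p + 1 - x - u)) / (p + 1) * N p (x + u) := by
  simp only [cardinalBSpline_succ, mul_add, sum_add_distrib]
  rw [sum_range_succ, sum_range_succ' _ (p + 1),
    cardinalBSpline_eq_zero_of_add_one_le p (x := x + (p + 1 : ℕ)) (by push_cast; linarith),
    cardinalBSpline_eq_zero_of_neg p (x := x + (0 : ℕ) - 1) (by push_cast; linarith)]
  simp only [mul_zero, add_zero, ← sum_add_distrib]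
  refine sum_congr rfl fun u _ => ?_
  push_cast
  rw [show x + (u + 1) - 1 = x + u by ring]
  ring

theorem sum_range_cardinalBSpline_add (p : ℕ) {x : ℝ} (hx₀ : 0 ≤ x) (hx₁ : x < 1) :
    ∑ u ∈ range (p + 1), N p (x + u) = 1 := by
  induction p with
  | zero =>
    rw [sum_range_one, Nat.cast_zero, add_zero]
    exact if_pos ⟨hx₀, hx₁⟩
  | succ p ih =>
    have h := sum_range_mul_cardinalBSpline_succ p (fun _ => 1) hx₀ hx₁
    simp only [one_mul] at h
    rw [h, ← ih]
    refine sum_congr rfl fun u _ => ?_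
    field_simp
    ring

theorem sum_range_natCast_mul_cardinalBSpline_add {p : ℕ} (hp : 1 ≤ p) {x : ℝ} (hx₀ : 0 ≤ x)
    (hx₁ : x < 1) :
    ∑ u ∈ range (p + 1), u * N p (x + u) = (p + 1) / 2 - x := by
  -- multiplied by `p`, the identity also holds (trivially) for `p = 0`, which starts the induction
  suffices key : ∀ q : ℕ, q * ∑ u ∈ range (q + 1), u * N q (x + u) = q * ((q + 1) / 2 - x) from
    mul_left_cancel₀ (by positivity) (key p)
  intro q
  induction q with
  | zero => simp
  | succ q ih =>
    rw [sum_range_mul_cardinalBSpline_succ q (fun u => u) hx₀ hx₁, mul_sum]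
    have hsplit : ∀ u ∈ range (q + 1),
        ((q + 1 : ℕ) : ℝ) * ((u * (x + u) + ((u + 1 : ℕ) : ℝ) * (q + 1 - x - u)) / (q + 1) *
          N q (x + u)) = q * (u * N q (x + u)) + (q + 1 - x) * N q (x + u) := by
      intro u _
      push_cast
      field_simp
      ring
    rw [sum_congr rfl hsplit, sum_add_distrib, ← mul_sum, ← mul_sum, ih,
      sum_range_cardinalBSpline_add q hx₀ hx₁]
    push_cast
    ring

theorem bspline_eq_cardinalBSpline {t : ℕ → ℝ} {m : ℝ} (hm : 0 < m) (ht : ∀ i, t i = i / m) :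
    ∀ (p i : ℕ) (x : ℝ), bspline t p i x = N p (m * x - i)
  | 0, i, x => by
    have hlo : t i ≤ x ↔ 0 ≤ m * x - i := by
      rw [ht, div_le_iff₀' hm, sub_nonneg]
    have hhi : x < t (i + 1) ↔ m * x - i < 1 := by
      rw [ht, lt_div_iff₀' hm, sub_lt_iff_lt_add']
      push_cast
      rfl
    simp only [bspline, cardinalBSpline, hlo, hhi]
  | p + 1, i, x => by
    rw [bspline, cardinalBSpline_succ, bspline_eq_cardinalBSpline hm ht p i x,
      bspline_eq_cardinalBSpline hm ht p (i + 1) x, ht, ht, ht, ht]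
    have hl : (x - i / m) / ((i + p + 1 : ℕ) / m - i / m) = (m * x - i) / (p + 1) := by
      push_cast
      rw [← sub_div, show (i + p + 1 - i : ℝ) = p + 1 by ring]
      field_simp
    have hr : ((i + p + 2 : ℕ) / m - x) / ((i + p + 2 : ℕ) / m - (i + 1 : ℕ) / m) =
        (p + 2 - (m * x - i)) / (p + 1) := by
      push_cast
      rw [← sub_div, show (i + p + 2 - (i + 1) : ℝ) = p + 1 by ring]
      field_simp
      ring
    rw [hl, hr, Nat.cast_succ, sub_add_eq_sub_sub]

theorem sum_range_apply_natCast_sub_mul {g : ℝ → ℝ} {p j n : ℕ}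
    (hg : ∀ r ∉ Ioo 0 ((p : ℝ) + 1), g r = 0) (hpj : p ≤ j) (hjn : j ≤ n) (c : ℕ → ℝ) :
    ∑ i ∈ range n, g (j - i) * c i = ∑ u ∈ range p, g (u + 1) * c (j - 1 - u) := by
  have hlow : ∑ i ∈ range n, g (j - i) * c i = ∑ i ∈ range j, g (j - i) * c i := by
    refine (sum_subset (range_subset_range.mpr hjn) fun i _ hi => ?_).symm
    rw [hg _ fun h => by simp at hi; linarith [h.1, (Nat.cast_le (α := ℝ)).mpr hi], zero_mul]
  have hhigh : ∑ u ∈ range p, g (u + 1) * c (j - 1 - u) =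
      ∑ u ∈ range j, g (u + 1) * c (j - 1 - u) := by
    refine sum_subset (range_subset_range.mpr hpj) fun u _ hu => ?_
    rw [hg _ fun h => by simp at hu; linarith [h.2, (Nat.cast_le (α := ℝ)).mpr hu], zero_mul]
  rw [hlow, hhigh, ← sum_range_reflect]
  refine sum_congr rfl fun u hu => ?_
  rw [Finset.mem_range] at hu
  rw [Nat.cast_sub (by omega), Nat.cast_sub (by omega)]
  congr 2
  push_cast
  ring

theorem sum_range_cardinalBSpline_natCast_sub_mul_affine {p j n : ℕ} (hp : 1 ≤ p) (hpj : p ≤ j)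
    (hjn : j ≤ n) (a b : ℝ) :
    ∑ i ∈ range n, N p (j - i) * (a + i * b) = a + (j - (p + 1) / 2) * b := by
  have hshift : ∀ f : ℕ → ℝ, ∑ u ∈ range (p + 1), f u * N p (0 + u) =
      ∑ u ∈ range p, f (u + 1) * N p (u + 1) := fun f => by
    rw [sum_range_succ', Nat.cast_zero, add_zero, cardinalBSpline_eq_zero_of_notMem hp (by simp),
      mul_zero, add_zero]
    simp only [Nat.cast_succ, zero_add]
  have hunity : ∑ u ∈ range p, N p (u + 1) = 1 := by
    have h := hshift fun _ => 1
    simp only [one_mul] at h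
    rw [← h, sum_range_cardinalBSpline_add p le_rfl one_pos]
  have hmean : ∑ u ∈ range p, (u + 1) * N p (u + 1) = (p + 1) / 2 := by
    have h := hshift fun u => u
    rw [sum_range_natCast_mul_cardinalBSpline_add hp le_rfl one_pos, sub_zero] at h
    push_cast at h
    exact h.symm
  rw [sum_range_apply_natCast_sub_mul (fun _ => cardinalBSpline_eq_zero_of_notMem hp) hpj hjn]
  calc ∑ u ∈ range p, N p (u + 1) * (a + ((j - 1 - u : ℕ) : ℝ) * b)
      = (a + j * b) * ∑ u ∈ range p, N p (u + 1) -
          b * ∑ u ∈ range p, (u + 1) * N p (u + 1) := by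
        rw [mul_sum, mul_sum, ← sum_sub_distrib]
        refine sum_congr rfl fun u hu => ?_
        rw [Finset.mem_range] at hu
        rw [Nat.cast_sub (by omega), Nat.cast_sub (by omega)]
        push_cast
        ring
    _ = a + (j - (p + 1) / 2) * b := by rw [hunity, hmean]; ring

theorem iteratedDeriv_sum_cardinalBSpline_mul {k p : ℕ} (hk : k < p) (m : ℝ) (c : ℕ → ℝ) (n : ℕ)
    (s : ℝ) :
    iteratedDeriv k (fun s => ∑ i ∈ range n, N p (m * s - i) * c i) s =
      m ^ k * ∑ i ∈ range n, iteratedDeriv k (N p) (m * s - i) * c i := by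
  have hsmooth : ∀ i : ℕ, ContDiff ℝ k fun u => N p (u - i) := fun i =>
    (contDiff_cardinalBSpline hk).comp (contDiff_id.sub contDiff_const)
  have hterm : ∀ i : ℕ, ContDiff ℝ k fun s => N p (m * s - i) * c i := fun i =>
    ((hsmooth i).comp (contDiff_const.mul contDiff_id)).mul contDiff_const
  rw [iteratedDeriv_fun_sum fun i _ => (hterm i).contDiffAt, mul_sum]
  refine sum_congr rfl fun i _ => ?_
  rw [iteratedDeriv_mul_const_field, iteratedDeriv_comp_const_mul (hsmooth i) m
    (f := fun u => N p (u - i)), iteratedDeriv_comp_sub_const]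
  ring

/-- Theorem 2 of the paper: with uniform knots `t_i = i/(n+p)` and control points
`x_i = x_0 + i·H`, `x_0 = -L/2 - L(p-1)/(2(n-p))`, `H = L/(n-p)`, `y_i = y_{n-p+i}`,
the plane B-spline curve spans exactly `[-L/2, L/2]` horizontally and its `y`-coordinate
matches at the two ends up to the `(p-1)`-st derivative. -/
theorem periodic_bspline_curve_uniform (p n : ℕ) (hp : 1 ≤ p) (hn : p < n)
    (L : ℝ) (t : ℕ → ℝ) (ht : ∀ i, t i = (i : ℝ) / (n + p))
    (x y : ℕ → ℝ)
    (hx : ∀ i < n, x i = (-(L / 2) - L * ((p : ℝ) - 1) / (2 * ((n : ℝ) - p)))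
            + (i : ℝ) * (L / ((n : ℝ) - p)))
    (hy : ∀ i < p, y i = y (n - p + i))
    (X Y : ℝ → ℝ)
    (hX : X = fun s => ∑ i ∈ Finset.range n, bspline t p i s * x i)
    (hY : Y = fun s => ∑ i ∈ Finset.range n, bspline t p i s * y i) :
    X (t p) = -(L / 2) ∧ X (t n) = L / 2 ∧
      ∀ k < p, iteratedDeriv k Y (t p) = iteratedDeriv k Y (t n) := by
  have hpn : (p : ℝ) < n := by exact_mod_cast hn
  have hm : (0 : ℝ) < n + p := by linarith [(Nat.cast_nonneg p : (0 : ℝ) ≤ p)]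
  have hB := bspline_eq_cardinalBSpline hm ht p
  have hknot : ∀ j : ℕ, (n + p) * t j = j := fun j => by rw [ht]; field_simp
  have hXknot : ∀ j, p ≤ j → j ≤ n → X (t j) =
      -(L / 2) - L * (p - 1) / (2 * (n - p)) + (j - (p + 1) / 2) * (L / (n - p)) :=
    fun j hpj hjn => by
    rw [← sum_range_cardinalBSpline_natCast_sub_mul_affine hp hpj hjn, hX]
    exact sum_congr rfl fun i hi => by rw [hB, hknot, hx i (Finset.mem_range.mp hi)]
  have hYknot : ∀ k < p, ∀ j, p ≤ j → j ≤ n → iteratedDeriv k Y (t j) =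
      (n + p) ^ k * ∑ u ∈ range p, iteratedDeriv k (N p) (u + 1) * y (j - 1 - u) :=
    fun k hk j hpj hjn => by
      simp only [hY, hB]
      rw [iteratedDeriv_sum_cardinalBSpline_mul hk, hknot, sum_range_apply_natCast_sub_mul
        (fun _ => iteratedDeriv_cardinalBSpline_eq_zero_of_notMem hk) hpj hjn]
  have hnp : (n : ℝ) - p ≠ 0 := sub_ne_zero.mpr hpn.ne'
  refine ⟨?_, ?_, fun k hk => ?_⟩
  · rw [hXknot p le_rfl hn.le]
    field_simp
    ring
  · rw [hXknot n hn.le le_rfl]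
    field_simp
    ring
  · rw [hYknot k hk p le_rfl hn.le, hYknot k hk n hn.le le_rfl]
    refine congrArg _ (sum_congr rfl fun u hu => ?_)
    rw [Finset.mem_range] at hu
    rw [hy _ (by omega : p - 1 - u < p), show n - p + (p - 1 - u) = n - 1 - u by omega]
end

section
/- Let p ≥ 1 and n ≥ p, and let the knots be uniform: t_i := a + i·h for i = 0, …, n+p, with a ∈ ℝ and h > 0. Then the B-spline functions of degree p satisfy Σ_{i=0}^{p−1} i·B_i^p(t_p) = (p−1)/2. -/
/-!
On strictly increasing knots the B-splines of degree `p` reproduce constants and linear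
functions on `[t_p, t_N)`: `∑ B_i^p = 1` and `∑ (t_{i+1} + ⋯ + t_{i+p}) B_i^p(x) = p x`.
Both follow by induction on `p`, because the Cox–de Boor recursion turns `∑ c_i B_i^{p+1}`
into `∑ d_i B_i^p` with `d_{i+1} = c_i + w_{i+1}(x) (c_{i+1} - c_i)`, the boundary terms
vanishing by the support property. For uniform knots `t_i = a + i h`, at `x = t_p` (where
`B_p^p` vanishes) the second identity reads
`p a + h p (p + 1) / 2 + p h ∑ i B_i^p(t_p) = p (a + p h)`.
-/

open Finset

theorem sum_range_eq_sum_range_add_one_of_eq_zero {M : Type*} [AddCommMonoid M] (f : ℕ → M)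
    {N : ℕ} (h₀ : f 0 = 0) (hN : f N = 0) :
    ∑ i ∈ range N, f i = ∑ i ∈ range N, f (i + 1) := by
  rw [← add_zero (∑ i ∈ range N, f i), ← hN, ← sum_range_succ, sum_range_succ', h₀, add_zero]

section Bspline

variable {t : ℕ → ℝ} {x : ℝ}

theorem bspline_eq_zero_of_lt (ht : Monotone t) {i : ℕ} (hx : x < t i) (p : ℕ) :
    bspline t p i x = 0 := by
  induction p generalizing i with
  | zero => simp [bspline, not_le.mpr hx]
  | succ p ih =>
    rw [bspline, ih hx, ih (hx.trans_le (ht i.le_succ))]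
    ring

theorem bspline_eq_zero_of_le (ht : Monotone t) (p : ℕ) {i : ℕ} (hx : t (i + p + 1) ≤ x) :
    bspline t p i x = 0 := by
  induction p generalizing i with
  | zero => simp [bspline, hx]
  | succ p ih =>
    rw [bspline, ih ((ht (by omega)).trans hx),
      ih (by rwa [show i + 1 + p + 1 = i + (p + 1) + 1 by omega])]
    ring

theorem bspline_self (ht : StrictMono t) {p : ℕ} (hp : p ≠ 0) (i : ℕ) :
    bspline t p i (t i) = 0 := by
  obtain ⟨p, rfl⟩ := Nat.exists_eq_succ_of_ne_zero hp
  rw [bspline, bspline_eq_zero_of_lt ht.monotone (ht i.lt_succ_self)]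
  ring

theorem sum_mul_bspline_succ (ht : StrictMono t) {p N : ℕ} (c d : ℕ → ℝ)
    (hcd : ∀ i,
      c i + (x - t (i + 1)) / (t (i + p + 2) - t (i + 1)) * (c (i + 1) - c i) = d (i + 1))
    (hpx : t (p + 1) ≤ x) (hxN : x < t N) :
    ∑ i ∈ range N, c i * bspline t (p + 1) i x = ∑ i ∈ range N, d i * bspline t p i x := by
  have h₀ : bspline t p 0 x = 0 := bspline_eq_zero_of_le ht.monotone p (by simpa using hpx)
  have hN : bspline t p N x = 0 := bspline_eq_zero_of_lt ht.monotone hxN p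
  simp only [bspline, mul_add, sum_add_distrib]
  rw [sum_range_eq_sum_range_add_one_of_eq_zero
      (fun i => c i * ((x - t i) / (t (i + p + 1) - t i) * bspline t p i x))
      (by simp [h₀]) (by simp [hN]),
    sum_range_eq_sum_range_add_one_of_eq_zero (fun i => d i * bspline t p i x)
      (by simp [h₀]) (by simp [hN]),
    ← sum_add_distrib]
  refine sum_congr rfl fun i _ => ?_
  have hne : t (i + p + 2) - t (i + 1) ≠ 0 := sub_ne_zero.mpr (ht (by omega)).ne'
  rw [← hcd i, show i + 1 + p + 1 = i + p + 2 by omega]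
  field_simp
  ring

theorem sum_bspline_zero (ht : Monotone t) {N : ℕ} (h₀x : t 0 ≤ x) (hxN : x < t N) :
    ∑ i ∈ range N, bspline t 0 i x = 1 := by
  induction N with
  | zero => exact (h₀x.trans_lt hxN).false.elim
  | succ N ih =>
    rw [sum_range_succ]
    by_cases hlt : x < t N
    · rw [ih hlt, bspline_eq_zero_of_lt ht hlt, add_zero]
    · have hle : t N ≤ x := not_lt.mp hlt
      rw [sum_eq_zero fun i hi => bspline_eq_zero_of_le ht 0 ((ht (by simpa using hi)).trans hle)]
      simp [bspline, hle, hxN]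

theorem sum_bspline (ht : StrictMono t) (p : ℕ) {N : ℕ} (hpx : t p ≤ x) (hxN : x < t N) :
    ∑ i ∈ range N, bspline t p i x = 1 := by
  induction p with
  | zero => exact sum_bspline_zero ht.monotone hpx hxN
  | succ p ih =>
    have hsucc := sum_mul_bspline_succ ht (fun _ => 1) (fun _ => 1) (by simp) hpx hxN
    simp only [one_mul] at hsucc
    rw [hsucc, ih ((ht.monotone p.le_succ).trans hpx)]

-- `∑ j ∈ range p, t (i + j + 1)` is `p` times the Greville abscissa of `B_i^p`.
theorem sum_greville_mul_bspline (ht : StrictMono t) (p : ℕ) {N : ℕ} (hpx : t p ≤ x)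
    (hxN : x < t N) :
    ∑ i ∈ range N, (∑ j ∈ range p, t (i + j + 1)) * bspline t p i x = p * x := by
  induction p with
  | zero => simp
  | succ p ih =>
    rw [sum_mul_bspline_succ ht _ (fun i => ∑ j ∈ range p, t (i + j + 1) + x) ?_ hpx hxN]
    · have hpx' := (ht.monotone p.le_succ).trans hpx
      rw [sum_congr rfl fun i _ => add_mul _ _ _, sum_add_distrib, ← mul_sum, ih hpx',
        sum_bspline ht p hpx' hxN]
      push_cast
      ring
    · intro i
      have hne : t (i + p + 2) - t (i + 1) ≠ 0 := sub_ne_zero.mpr (ht (by omega)).ne'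
      rw [sum_range_succ' _ p, sum_range_succ _ p]
      simp only [show ∀ j, i + (j + 1) + 1 = i + 1 + j + 1 by omega, add_zero,
        show i + 1 + p + 1 = i + p + 2 by omega]
      field_simp
      ring

end Bspline

theorem sum_range_knots_of_uniform {t : ℕ → ℝ} {a h : ℝ} (ht : ∀ i, t i = a + (i : ℝ) * h)
    (i n : ℕ) : ∑ j ∈ range n, t (i + j + 1) = n * a + n * (n + 1) / 2 * h + n * h * i := by
  induction n with
  | zero => simp
  | succ n ih =>
    rw [sum_range_succ, ih, ht]
    push_cast
    ring

theorem bspline_Cp_general (p : ℕ) (hp : 1 ≤ p)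
    (a h : ℝ) (hh : 0 < h) (t : ℕ → ℝ) (ht : ∀ i, t i = a + (i : ℝ) * h) :
    ∑ i ∈ Finset.range p, (i : ℝ) * bspline t p i (t p) = ((p : ℝ) - 1) / 2 := by
  have hmono : StrictMono t := fun i j hij => by
    rw [ht, ht]
    gcongr
  have hend : bspline t p p (t p) = 0 := bspline_self hmono (by omega) p
  have hunity := sum_bspline hmono p le_rfl (hmono p.lt_succ_self)
  have hlinear := sum_greville_mul_bspline hmono p le_rfl (hmono p.lt_succ_self)
  rw [sum_range_succ, hend, add_zero] at hunity
  rw [sum_range_succ, hend, mul_zero, add_zero] at hlinear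
  simp only [sum_range_knots_of_uniform ht, add_mul, mul_assoc, sum_add_distrib, ← mul_sum,
    hunity] at hlinear
  rw [ht p] at hlinear ⊢
  have hph : (p : ℝ) * h ≠ 0 := by positivity
  apply mul_left_cancel₀ hph
  linear_combination hlinear

/-- Lemma (Appendix B) of the paper: for uniform knots,
`C_p = Σ_{i=0}^{p-1} i·B_i^p(t_p) = (p-1)/2`. -/
theorem bspline_Cp (p n : ℕ) (hp : 1 ≤ p) (hn : p ≤ n)
    (a h : ℝ) (hh : 0 < h) (t : ℕ → ℝ) (ht : ∀ i, t i = a + (i : ℝ) * h) :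
    ∑ i ∈ Finset.range p, (i : ℝ) * bspline t p i (t p) = ((p : ℝ) - 1) / 2 :=
  bspline_Cp_general p hp a h hh t ht
end

section
/- Let p ≥ 1 and n ≥ p + 2, and let the knots be uniform: t_i := a + i·h for i = 0, …, n+p, with a ∈ ℝ and h > 0. Then Σ_{i=1}^{p} (B_{i+1}^p(t_{p+1}) − B_i^p(t_{p+1}))·i² = −p. -/
open Finset

theorem sum_Icc_sub_mul_sq (e : ℕ → ℝ) (N : ℕ) (h0 : e 0 = 0) (hN : e (N + 1) = 0) :
    ∑ i ∈ Icc 1 N, (e (i + 1) - e i) * (i : ℝ) ^ 2 =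
      ∑ k ∈ range (N + 2), (1 - 2 * (k : ℝ)) * e k := by
  have hrange : ∑ i ∈ Icc 1 N, (e (i + 1) - e i) * (i : ℝ) ^ 2 =
      ∑ i ∈ range (N + 1), (e (i + 1) - e i) * (i : ℝ) ^ 2 := by
    rw [← Ico_add_one_right_eq_Icc, range_eq_Ico, sum_eq_sum_Ico_succ_bot (Nat.succ_pos N)]
    simp
  have hshift : ∑ i ∈ range (N + 1), e (i + 1) * (i : ℝ) ^ 2 =
      ∑ k ∈ range (N + 2), e k * ((k : ℝ) - 1) ^ 2 := by
    rw [sum_range_succ' (fun k => e k * ((k : ℝ) - 1) ^ 2)]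
    simp [h0]
  have htop : ∑ i ∈ range (N + 1), e i * (i : ℝ) ^ 2 =
      ∑ k ∈ range (N + 2), e k * (k : ℝ) ^ 2 := by
    rw [sum_range_succ _ (N + 1), hN, zero_mul, add_zero]
  rw [hrange]
  simp only [sub_mul]
  rw [sum_sub_distrib, hshift, htop, ← sum_sub_distrib]
  exact sum_congr rfl fun k _ => by ring

theorem bspline_apply_knot_eq_zero {t : ℕ → ℝ} (hmono : StrictMono t) :
    ∀ (q : ℕ) {i k : ℕ}, k < i ∨ i + q + 1 ≤ k → bspline t q i (t k) = 0
  | 0, i, k, hk => by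
    simp only [bspline, hmono.le_iff_le, hmono.lt_iff_lt]
    exact if_neg (by omega)
  | q + 1, i, k, hk => by
    simp only [bspline, bspline_apply_knot_eq_zero hmono q (by omega : k < i ∨ i + q + 1 ≤ k),
      bspline_apply_knot_eq_zero hmono q (by omega : k < i + 1 ∨ i + 1 + q + 1 ≤ k),
      mul_zero, add_zero]

theorem bspline_succ_apply_knot_succ {t : ℕ → ℝ} {a h : ℝ} (ht : ∀ i, t i = a + (i : ℝ) * h) :
    ∀ (q i k : ℕ), bspline t q (i + 1) (t (k + 1)) = bspline t q i (t k)
  | 0, i, k => by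
    have hstep : ∀ m : ℕ, t (m + 1) = t m + h := fun m => by
      rw [ht, ht]
      push_cast
      ring
    simp only [bspline, hstep, add_le_add_iff_right, add_lt_add_iff_right]
  | q + 1, i, k => by
    simp only [bspline, bspline_succ_apply_knot_succ ht q]
    simp only [ht]
    push_cast
    ring_nf

noncomputable def knotValue (t : ℕ → ℝ) (q i : ℕ) : ℝ :=
  bspline t q i (t (q + 1))

section UniformKnots

variable {t : ℕ → ℝ} {a h : ℝ}

theorem strictMono_of_uniform (hh : 0 < h) (ht : ∀ i, t i = a + (i : ℝ) * h) :
    StrictMono t := fun m n hmn => by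
  rw [ht, ht]
  gcongr

theorem knotValue_eq_zero (hmono : StrictMono t) {q i : ℕ} (hi : i = 0 ∨ q + 2 ≤ i) :
    knotValue t q i = 0 :=
  bspline_apply_knot_eq_zero hmono q (by omega)

theorem knotValue_zero_one (hmono : StrictMono t) : knotValue t 0 1 = 1 := by
  simp [knotValue, bspline, hmono.lt_iff_lt]

theorem knotValue_succ_succ (hh : 0 < h) (ht : ∀ i, t i = a + (i : ℝ) * h) (q j : ℕ) :
    knotValue t (q + 1) (j + 1) =
      ((q : ℝ) + 1 - j) / ((q : ℝ) + 1) * knotValue t q j +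
        ((j : ℝ) + 1) / ((q : ℝ) + 1) * knotValue t q (j + 1) := by
  have hcancel (x y : ℝ) : x * h / (y * h) = x / y := mul_div_mul_right x y hh.ne'
  simp only [knotValue, bspline, bspline_succ_apply_knot_succ ht]
  congr 2
  all_goals
    simp only [ht]
    conv_rhs => rw [← hcancel]
    push_cast
    congr 1 <;> ring

theorem knotValue_succ_eq_zero (hh : 0 < h) (ht : ∀ i, t i = a + (i : ℝ) * h) (q : ℕ) :
    knotValue t (q + 1) (q + 2) = 0 := by
  have hmono := strictMono_of_uniform hh ht
  rw [knotValue_succ_succ hh ht, knotValue_eq_zero hmono (Or.inr le_rfl)]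
  simp

/-- Transposed form of the recursion `knotValue_succ_succ`. -/
theorem sum_mul_knotValue_succ (hh : 0 < h) (ht : ∀ i, t i = a + (i : ℝ) * h)
    (f : ℕ → ℝ) (q : ℕ) :
    ∑ k ∈ range (q + 1 + 2), f k * knotValue t (q + 1) k =
      ∑ j ∈ range (q + 2),
        (((q : ℝ) + 1 - j) * f (j + 1) + j * f j) / ((q : ℝ) + 1) * knotValue t q j := by
  have hmono := strictMono_of_uniform hh ht
  have hshift : ∑ j ∈ range (q + 2), f (j + 1) * ((j : ℝ) + 1) / ((q : ℝ) + 1) *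
      knotValue t q (j + 1) =
        ∑ j ∈ range (q + 2), f j * j / ((q : ℝ) + 1) * knotValue t q j := by
    have := sum_range_succ' (fun j => f j * j / ((q : ℝ) + 1) * knotValue t q j) (q + 2)
    rw [sum_range_succ, knotValue_eq_zero hmono (Or.inr le_rfl)] at this
    simpa using this.symm
  rw [sum_range_succ', knotValue_eq_zero hmono (Or.inl rfl), mul_zero, add_zero]
  simp only [knotValue_succ_succ hh ht, mul_add, sum_add_distrib]
  simp only [← mul_assoc, mul_div_assoc', hshift, ← sum_add_distrib]
  exact sum_congr rfl fun j _ => by ring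

theorem sum_knotValue (hh : 0 < h) (ht : ∀ i, t i = a + (i : ℝ) * h) :
    ∀ q : ℕ, ∑ k ∈ range (q + 2), knotValue t q k = 1
  | 0 => by
    have hmono := strictMono_of_uniform hh ht
    simp [sum_range_succ, knotValue_eq_zero hmono, knotValue_zero_one hmono]
  | q + 1 => by
    have hq : (q : ℝ) + 1 ≠ 0 := by positivity
    simpa [← add_mul, div_self hq, sum_knotValue hh ht q] using
      sum_mul_knotValue_succ hh ht (fun _ => 1) q

theorem sum_natCast_mul_knotValue_succ (hh : 0 < h) (ht : ∀ i, t i = a + (i : ℝ) * h) (q : ℕ) :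
    ∑ k ∈ range (q + 1 + 2), (k : ℝ) * knotValue t (q + 1) k =
      (q : ℝ) / ((q : ℝ) + 1) * ∑ k ∈ range (q + 2), (k : ℝ) * knotValue t q k + 1 := by
  rw [sum_mul_knotValue_succ hh ht (fun k => (k : ℝ))]
  calc _ = ∑ j ∈ range (q + 2),
        ((q : ℝ) / ((q : ℝ) + 1) * ((j : ℝ) * knotValue t q j) + knotValue t q j) := by
        refine sum_congr rfl fun j _ => ?_
        push_cast
        field_simp
        ring
    _ = _ := by rw [sum_add_distrib, ← mul_sum, sum_knotValue hh ht q]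

theorem sum_natCast_mul_knotValue (hh : 0 < h) (ht : ∀ i, t i = a + (i : ℝ) * h) :
    ∀ q : ℕ, ∑ k ∈ range (q + 1 + 2), (k : ℝ) * knotValue t (q + 1) k = ((q : ℝ) + 2) / 2
  | 0 => by simp [sum_natCast_mul_knotValue_succ hh ht]
  | q + 1 => by
    rw [sum_natCast_mul_knotValue_succ hh ht, sum_natCast_mul_knotValue hh ht q]
    push_cast
    field_simp
    ring

end UniformKnots

theorem bspline_T2_general (p : ℕ)
    (a h : ℝ) (hh : 0 < h) (t : ℕ → ℝ) (ht : ∀ i, t i = a + (i : ℝ) * h) :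
    ∑ i ∈ Finset.Icc 1 p,
        (bspline t p (i + 1) (t (p + 1)) - bspline t p i (t (p + 1))) * (i : ℝ) ^ 2 =
      -(p : ℝ) := by
  cases p with
  | zero => simp
  | succ q =>
    have hmono := strictMono_of_uniform hh ht
    change ∑ i ∈ Icc 1 (q + 1),
        (knotValue t (q + 1) (i + 1) - knotValue t (q + 1) i) * (i : ℝ) ^ 2 = _
    rw [sum_Icc_sub_mul_sq _ _ (knotValue_eq_zero hmono (Or.inl rfl))
      (knotValue_succ_eq_zero hh ht q)]
    simp only [sub_mul, one_mul, sum_sub_distrib, mul_assoc, ← mul_sum, sum_knotValue hh ht,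
      sum_natCast_mul_knotValue hh ht]
    push_cast
    ring

/-- For uniform knots, the quantity
`T_2 = Σ_{i=1}^{p} (B_{i+1}^p(t_{p+1}) − B_i^p(t_{p+1}))·i²` equals `−p`. -/
theorem bspline_T2 (p n : ℕ) (hp : 1 ≤ p) (hn : p + 2 ≤ n)
    (a h : ℝ) (hh : 0 < h) (t : ℕ → ℝ) (ht : ∀ i, t i = a + (i : ℝ) * h) :
    ∑ i ∈ Finset.Icc 1 p,
        (bspline t p (i + 1) (t (p + 1)) - bspline t p i (t (p + 1))) * (i : ℝ) ^ 2 =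
      -(p : ℝ) :=
  bspline_T2_general p a h hh t ht
end
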